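/- For the Hirota–Satsuma system u_t = 6α·u·u_x − 6v·v_x + α·u_xxx, v_t = −3u·v_x − v_xxx with any nonzero parameter α, the quantity ρ = u² − 2v² is a conserved density: ∂_t(u² − 2v²) is a total x-derivative along any smooth solution. -/

import Mathlib

/-- Partial derivative with respect to the first (space) variable. -/
noncomputable def pdx (u : ℝ × ℝ → ℝ) : ℝ × ℝ → ℝ :=
  fun p => deriv (fun x => u (x, p.2)) p.1

/-- Partial derivative with respect to the second (time) variable. -/
noncomputable def pdt (u : ℝ × ℝ → ℝ) : ℝ × ℝ → ℝ :=
  fun p => deriv (fun t => u (p.1, t)) p.2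

private lemma keyx (f : ℝ × ℝ → ℝ) (hf : ContDiff ℝ (⊤ : ℕ∞) f) (p : ℝ × ℝ) :
    HasDerivAt (fun x => f (x, p.2)) (pdx f p) p.1 := by
  have hline : DifferentiableAt ℝ (fun x : ℝ => (x, p.2)) p.1 :=
    differentiableAt_id.prodMk (differentiableAt_const _)
  have : DifferentiableAt ℝ (fun x => f (x, p.2)) p.1 :=
    ((hf.differentiable (by simp) (p.1, p.2)).comp p.1 hline)
  exact this.hasDerivAt

private lemma keyt (f : ℝ × ℝ → ℝ) (hf : ContDiff ℝ (⊤ : ℕ∞) f) (p : ℝ × ℝ) :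
    HasDerivAt (fun t => f (p.1, t)) (pdt f p) p.2 := by
  have hline : DifferentiableAt ℝ (fun t : ℝ => (p.1, t)) p.2 :=
    (differentiableAt_const _).prodMk differentiableAt_id
  have : DifferentiableAt ℝ (fun t => f (p.1, t)) p.2 :=
    ((hf.differentiable (by simp) (p.1, p.2)).comp p.2 hline)
  exact this.hasDerivAt

private lemma pdx_smooth {f : ℝ × ℝ → ℝ} (hf : ContDiff ℝ (⊤ : ℕ∞) f) : ContDiff ℝ (⊤ : ℕ∞) (pdx f) := by
  have h : pdx f = fun p => fderiv ℝ f p (1, 0) := by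
    funext p
    have hline : HasDerivAt (fun x : ℝ => (x, p.2)) ((1 : ℝ), (0 : ℝ)) p.1 :=
      (hasDerivAt_id p.1).prodMk (hasDerivAt_const p.1 p.2)
    have := ((hf.differentiable (by simp) (p.1, p.2)).hasFDerivAt).comp_hasDerivAt p.1 hline
    exact this.deriv
  rw [h]
  exact (hf.fderiv_right (by simp)).clm_apply contDiff_const

set_option maxHeartbeats 1000000 in
theorem hirota_satsuma_rank4_conserved (α : ℝ) (hα : α ≠ 0) (u v : ℝ × ℝ → ℝ)
    (hu : ContDiff ℝ (⊤ : ℕ∞) u) (hv : ContDiff ℝ (⊤ : ℕ∞) v)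
    (heq1 : ∀ p : ℝ × ℝ,
      pdt u p = 6 * α * u p * pdx u p - 6 * v p * pdx v p + α * pdx (pdx (pdx u)) p)
    (heq2 : ∀ p : ℝ × ℝ, pdt v p = -3 * u p * pdx v p - pdx (pdx (pdx v)) p) :
    ∃ J : ℝ × ℝ → ℝ,
      ∀ p : ℝ × ℝ, pdt (fun q => (u q) ^ 2 - 2 * (v q) ^ 2) p + pdx J p = 0 := by
  refine ⟨fun q => -((4 * α) * (u q) ^ 3 + (2 * α) * (u q * pdx (pdx u) q)
      - α * (pdx u q) ^ 2 + 4 * (v q * pdx (pdx v) q) - 2 * (pdx v q) ^ 2), fun p => ?_⟩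
  have hux := keyx u hu p
  have hvx := keyx v hv p
  have huxx := keyx (pdx u) (pdx_smooth hu) p
  have hvxx := keyx (pdx v) (pdx_smooth hv) p
  have huxxx := keyx (pdx (pdx u)) (pdx_smooth (pdx_smooth hu)) p
  have hvxxx := keyx (pdx (pdx v)) (pdx_smooth (pdx_smooth hv)) p
  have hut := keyt u hu p
  have hvt := keyt v hv p
  have h1 : pdt (fun q => (u q) ^ 2 - 2 * (v q) ^ 2) p
      = (2 : ℕ) * u p ^ 1 * pdt u p - 2 * ((2 : ℕ) * v p ^ 1 * pdt v p) :=
    ((hut.pow 2).sub ((hvt.pow 2).const_mul 2)).deriv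
  have h2 : pdx (fun q => -((4 * α) * (u q) ^ 3 + (2 * α) * (u q * pdx (pdx u) q)
      - α * (pdx u q) ^ 2 + 4 * (v q * pdx (pdx v) q) - 2 * (pdx v q) ^ 2)) p
      = -((4 * α) * ((3 : ℕ) * u p ^ 2 * pdx u p)
        + (2 * α) * (pdx u p * pdx (pdx u) p + u p * pdx (pdx (pdx u)) p)
        - α * ((2 : ℕ) * pdx u p ^ 1 * pdx (pdx u) p)
        + 4 * (pdx v p * pdx (pdx v) p + v p * pdx (pdx (pdx v)) p)
        - 2 * ((2 : ℕ) * pdx v p ^ 1 * pdx (pdx v) p)) :=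
    (((((((hux.pow 3).const_mul (4 * α)).add ((hux.mul huxxx).const_mul (2 * α))).sub
      ((huxx.pow 2).const_mul α)).add ((hvx.mul hvxxx).const_mul 4)).sub
      ((hvxx.pow 2).const_mul 2)).neg).deriv
  rw [h1, h2]
  linear_combination 2 * u p * heq1 p - 4 * v p * heq2 p
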